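/- arXiv:1302.6659 — 2 statements merged into one kernel-verified Lean document; each statement's English description precedes it below -/
import Mathlib

section
/- Let α ∈ (0,1). Suppose u : {0,…,n} → [0,1] satisfies u(n) = 1 and F_{u(y)}(y) = α/2 for every y with 0 ≤ y ≤ n−1, and suppose ℓ : {0,…,n} → [0,1] satisfies ℓ(0) = 0 and 1 − F_{ℓ(y)}(y−1) = α/2 for every y with 1 ≤ y ≤ n. Then for every θ ∈ [0,1], Σ_{y : u(y) < θ} f_θ(y) ≤ α/2 and Σ_{y : ℓ(y) > θ} f_θ(y) ≤ α/2; that is, the Clopper–Pearson interval [ℓ(Y), u(Y)] satisfies P_θ(θ > u(Y)) ≤ α/2 and P_θ(θ < ℓ(Y)) ≤ α/2 for all θ. -/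
/-- The Binomial(n, θ) probability mass function `f_θ(y) = C(n,y) θ^y (1-θ)^(n-y)`. -/
noncomputable def binomP (n : ℕ) (θ : ℝ) (y : ℕ) : ℝ :=
  (n.choose y : ℝ) * θ ^ y * (1 - θ) ^ (n - y)

/-- `F_θ(y-1) = ∑_{j=0}^{y-1} f_θ(j)`, with the convention `F_θ(-1) = 0`. -/
noncomputable def binomCDFpred (n : ℕ) (θ : ℝ) (y : ℕ) : ℝ :=
  ∑ j ∈ Finset.range y, binomP n θ j

/-- The Binomial(n, θ) cumulative distribution function `F_θ(y) = ∑_{j=0}^{y} f_θ(j)`. -/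
noncomputable def binomCDF (n : ℕ) (θ : ℝ) (y : ℕ) : ℝ :=
  ∑ j ∈ Finset.range (y + 1), binomP n θ j

open Finset Polynomial

/-
The map `θ ↦ F_θ(y)` is antitone on `[0,1]`: the binomial masses are Bernstein polynomials,
whose derivatives telescope to `d/dθ F_θ(y) = -n · C(n-1,y) θ^y (1-θ)^(n-1-y) ≤ 0`.
If `k` is the largest outcome with `u(k) < θ`, then `k < n` and
`P_θ(u(Y) < θ) ≤ F_θ(k) ≤ F_{u(k)}(k) = α/2`; symmetrically, with `k` the smallest outcome with
`θ < ℓ(k)`, we have `k ≥ 1` and `P_θ(θ < ℓ(Y)) ≤ 1 - F_θ(k-1) ≤ 1 - F_{ℓ(k)}(k-1) = α/2`.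
-/

theorem derivative_sum_range_bernsteinPolynomial (R : Type*) [CommRing R] (n y : ℕ) :
    derivative (∑ j ∈ range (y + 1), bernsteinPolynomial R n j) =
      -n * bernsteinPolynomial R (n - 1) y := by
  induction y with
  | zero => simp [bernsteinPolynomial.derivative_zero]
  | succ y ih =>
    rw [sum_range_succ, derivative_add, ih, bernsteinPolynomial.derivative_succ]
    ring

theorem binomP_eq_eval (n : ℕ) (θ : ℝ) (y : ℕ) :
    binomP n θ y = (bernsteinPolynomial ℝ n y).eval θ := by
  simp [binomP, bernsteinPolynomial]

theorem binomP_nonneg {n : ℕ} {θ : ℝ} (hθ : θ ∈ Set.Icc (0 : ℝ) 1) (y : ℕ) :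
    0 ≤ binomP n θ y := by
  unfold binomP
  exact mul_nonneg (mul_nonneg (Nat.cast_nonneg _) (pow_nonneg hθ.1 y))
    (pow_nonneg (sub_nonneg.2 hθ.2) _)

theorem sum_range_binomP (n : ℕ) (θ : ℝ) : ∑ y ∈ range (n + 1), binomP n θ y = 1 := by
  simp_rw [binomP_eq_eval, ← eval_finsetSum, bernsteinPolynomial.sum, eval_one]

theorem hasDerivAt_binomCDF (n y : ℕ) (θ : ℝ) :
    HasDerivAt (fun t => binomCDF n t y) (-n * binomP (n - 1) θ y) θ := by
  simp_rw [binomCDF, binomP_eq_eval, ← eval_finsetSum]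
  have := (∑ j ∈ range (y + 1), bernsteinPolynomial ℝ n j).hasDerivAt θ
  rwa [derivative_sum_range_bernsteinPolynomial, eval_mul, eval_neg, eval_natCast] at this

theorem binomCDF_antitoneOn (n y : ℕ) :
    AntitoneOn (fun θ => binomCDF n θ y) (Set.Icc 0 1) := by
  refine antitoneOn_of_hasDerivWithinAt_nonpos (convex_Icc 0 1)
    (fun θ _ => (hasDerivAt_binomCDF n y θ).continuousAt.continuousWithinAt)
    (fun θ _ => (hasDerivAt_binomCDF n y θ).hasDerivWithinAt) fun θ hθ => ?_
  rw [interior_Icc] at hθ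
  have := binomP_nonneg (n := n - 1) (Set.Ioo_subset_Icc_self hθ) y
  nlinarith [(n.cast_nonneg : (0 : ℝ) ≤ n)]

theorem binomCDFpred_antitoneOn (n y : ℕ) :
    AntitoneOn (fun θ => binomCDFpred n θ y) (Set.Icc 0 1) := by
  cases y with
  | zero => simp [binomCDFpred, antitoneOn_const]
  | succ y => exact binomCDF_antitoneOn n y

theorem sum_binomP_le_binomCDF {n k : ℕ} {θ : ℝ} (hθ : θ ∈ Set.Icc (0 : ℝ) 1) {S : Finset ℕ}
    (hS : ∀ y ∈ S, y ≤ k) : ∑ y ∈ S, binomP n θ y ≤ binomCDF n θ k :=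
  sum_le_sum_of_subset_of_nonneg (fun y hy => mem_range_succ_iff.2 (hS y hy))
    fun y _ _ => binomP_nonneg hθ y

theorem sum_binomP_le_one_sub_binomCDFpred {n k : ℕ} (hk : k ≤ n) {θ : ℝ}
    (hθ : θ ∈ Set.Icc (0 : ℝ) 1) {S : Finset ℕ} (hS : ∀ y ∈ S, k ≤ y ∧ y ≤ n) :
    ∑ y ∈ S, binomP n θ y ≤ 1 - binomCDFpred n θ k := by
  have hSk : S ⊆ Ico k (n + 1) := fun y hy =>
    mem_Ico.2 ⟨(hS y hy).1, Nat.lt_succ_of_le (hS y hy).2⟩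
  calc ∑ y ∈ S, binomP n θ y ≤ ∑ y ∈ Ico k (n + 1), binomP n θ y :=
        sum_le_sum_of_subset_of_nonneg hSk fun y _ _ => binomP_nonneg hθ y
    _ = 1 - binomCDFpred n θ k := by
        rw [sum_Ico_eq_sub _ (by omega), sum_range_binomP, binomCDFpred]

theorem sum_binomP_filter_lt_le {n : ℕ} {c : ℝ} (hc : 0 ≤ c) {u : ℕ → ℝ}
    (hu01 : ∀ y ≤ n, u y ∈ Set.Icc (0 : ℝ) 1) (hun : u n = 1)
    (hu : ∀ y ≤ n - 1, binomCDF n (u y) y = c) {θ : ℝ} (hθ : θ ∈ Set.Icc (0 : ℝ) 1) :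
    ∑ y ∈ (range (n + 1)).filter (fun y => u y < θ), binomP n θ y ≤ c := by
  set S := (range (n + 1)).filter (fun y => u y < θ)
  rcases S.eq_empty_or_nonempty with hS | hS
  · simpa [hS] using hc
  obtain ⟨hk, hkθ⟩ := mem_filter.1 (S.max'_mem hS)
  set k := S.max' hS
  have hkn : k ≤ n - 1 := by
    have : k ≠ n := fun h => by rw [h, hun] at hkθ; linarith [hθ.2]
    have := mem_range.1 hk
    omega
  calc ∑ y ∈ S, binomP n θ y ≤ binomCDF n θ k := sum_binomP_le_binomCDF hθ (S.le_max' · ·)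
    _ ≤ binomCDF n (u k) k := binomCDF_antitoneOn n k (hu01 k (by omega)) hθ hkθ.le
    _ = c := hu k hkn

theorem sum_binomP_filter_gt_le {n : ℕ} {c : ℝ} (hc : 0 ≤ c) {l : ℕ → ℝ}
    (hl01 : ∀ y ≤ n, l y ∈ Set.Icc (0 : ℝ) 1) (hl0 : l 0 = 0)
    (hl : ∀ y, 1 ≤ y → y ≤ n → 1 - binomCDFpred n (l y) y = c) {θ : ℝ}
    (hθ : θ ∈ Set.Icc (0 : ℝ) 1) :
    ∑ y ∈ (range (n + 1)).filter (fun y => θ < l y), binomP n θ y ≤ c := by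
  set S := (range (n + 1)).filter (fun y => θ < l y)
  rcases S.eq_empty_or_nonempty with hS | hS
  · simpa [hS] using hc
  obtain ⟨hk, hkθ⟩ := mem_filter.1 (S.min'_mem hS)
  set k := S.min' hS
  have hkn : k ≤ n := Nat.lt_succ_iff.1 (mem_range.1 hk)
  have hk1 : 1 ≤ k := Nat.one_le_iff_ne_zero.2 fun h => by
    rw [h, hl0] at hkθ; linarith [hθ.1]
  have hS_Icc (y) (hy : y ∈ S) : k ≤ y ∧ y ≤ n :=
    ⟨S.min'_le y hy, Nat.lt_succ_iff.1 (mem_range.1 (mem_filter.1 hy).1)⟩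
  calc ∑ y ∈ S, binomP n θ y ≤ 1 - binomCDFpred n θ k :=
        sum_binomP_le_one_sub_binomCDFpred hkn hθ hS_Icc
    _ ≤ 1 - binomCDFpred n (l k) k :=
        sub_le_sub_left (binomCDFpred_antitoneOn n k hθ (hl01 k hkn) hkθ.le) 1
    _ = c := hl k hk1 hkn

theorem stmt_5_general (n : ℕ) (α : ℝ) (hα : α ∈ Set.Ioo (0 : ℝ) 1)
    (u l : ℕ → ℝ)
    (hu01 : ∀ y ≤ n, u y ∈ Set.Icc (0 : ℝ) 1)
    (hl01 : ∀ y ≤ n, l y ∈ Set.Icc (0 : ℝ) 1)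
    (hun : u n = 1)
    (hu : ∀ y ≤ n - 1, binomCDF n (u y) y = α / 2)
    (hl0 : l 0 = 0)
    (hl : ∀ y, 1 ≤ y → y ≤ n → 1 - binomCDFpred n (l y) y = α / 2)
    (θ : ℝ) (hθ : θ ∈ Set.Icc (0 : ℝ) 1) :
    (∑ y ∈ (Finset.range (n + 1)).filter (fun y => u y < θ), binomP n θ y) ≤ α / 2 ∧
    (∑ y ∈ (Finset.range (n + 1)).filter (fun y => θ < l y), binomP n θ y) ≤ α / 2 := by
  have hα2 : 0 ≤ α / 2 := by linarith [hα.1]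
  exact ⟨sum_binomP_filter_lt_le hα2 hu01 hun hu hθ, sum_binomP_filter_gt_le hα2 hl01 hl0 hl hθ⟩

/-- The Clopper–Pearson `1-α` interval `[ℓ(Y), u(Y)]`, defined by `u(n) = 1`,
`F_{u(y)}(y) = α/2` for `y ≤ n-1`, `ℓ(0) = 0` and `1 - F_{ℓ(y)}(y-1) = α/2` for `1 ≤ y ≤ n`,
satisfies `P_θ(θ > u(Y)) ≤ α/2` and `P_θ(θ < ℓ(Y)) ≤ α/2` for every `θ ∈ [0,1]`. -/
theorem stmt_5 (n : ℕ) (hn : 1 ≤ n) (α : ℝ) (hα : α ∈ Set.Ioo (0 : ℝ) 1)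
    (u l : ℕ → ℝ)
    (hu01 : ∀ y ≤ n, u y ∈ Set.Icc (0 : ℝ) 1)
    (hl01 : ∀ y ≤ n, l y ∈ Set.Icc (0 : ℝ) 1)
    (hun : u n = 1)
    (hu : ∀ y ≤ n - 1, binomCDF n (u y) y = α / 2)
    (hl0 : l 0 = 0)
    (hl : ∀ y, 1 ≤ y → y ≤ n → 1 - binomCDFpred n (l y) y = α / 2)
    (θ : ℝ) (hθ : θ ∈ Set.Icc (0 : ℝ) 1) :
    (∑ y ∈ (Finset.range (n + 1)).filter (fun y => u y < θ), binomP n θ y) ≤ α / 2 ∧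
    (∑ y ∈ (Finset.range (n + 1)).filter (fun y => θ < l y), binomP n θ y) ≤ α / 2 :=
  stmt_5_general n α hα u l hu01 hl01 hun hu hl0 hl θ hθ
end

section
/- Let y be an integer with 0 ≤ y ≤ n, let 0 ≤ v₁ < v₂ ≤ 1, and let c ∈ (0,1). If θ₁, θ₂ ∈ (0,1) satisfy (1−v₁)(1 − F_{θ₁}(y−1)) + v₁(1 − F_{θ₁}(y)) = c and (1−v₂)(1 − F_{θ₂}(y−1)) + v₂(1 − F_{θ₂}(y)) = c, then θ₁ < θ₂. (The lower endpoint ℓ_R(y,v) of the randomized confidence interval is strictly increasing in v.) -/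
open Polynomial Set Finset

theorem bernsteinPolynomial.derivative_sum_range_succ {R : Type*} [CommRing R] (n k : ℕ) :
    derivative (∑ j ∈ range (k + 1), bernsteinPolynomial R n j) =
      -n * bernsteinPolynomial R (n - 1) k := by
  induction k with
  | zero => simp [bernsteinPolynomial.derivative_zero]
  | succ k ih =>
    rw [sum_range_succ, derivative_add, ih, bernsteinPolynomial.derivative_succ]
    ring

theorem bernsteinPolynomial.eval_nonneg (n k : ℕ) {θ : ℝ} (h0 : 0 ≤ θ) (h1 : θ ≤ 1) :
    0 ≤ (bernsteinPolynomial ℝ n k).eval θ := by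
  have : 0 ≤ 1 - θ := sub_nonneg.mpr h1
  simp only [bernsteinPolynomial, eval_mul, eval_pow, eval_sub, eval_one, eval_X, eval_natCast]
  positivity

theorem binomP_eq_eval_bernsteinPolynomial (n : ℕ) (θ : ℝ) (j : ℕ) :
    binomP n θ j = (bernsteinPolynomial ℝ n j).eval θ := by
  simp [binomP, bernsteinPolynomial]

theorem binomP_pos {n y : ℕ} (hy : y ≤ n) {θ : ℝ} (hθ : θ ∈ Ioo (0 : ℝ) 1) :
    0 < binomP n θ y := by
  obtain ⟨hθ₀, hθ₁⟩ := hθ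
  have : (0 : ℝ) < 1 - θ := sub_pos.mpr hθ₁
  have : (0 : ℝ) < n.choose y := by exact_mod_cast Nat.choose_pos hy
  unfold binomP
  positivity

theorem antitoneOn_binomCDFpred (n k : ℕ) :
    AntitoneOn (fun θ => binomCDFpred n θ k) (Icc 0 1) := by
  cases k with
  | zero => simp [binomCDFpred, antitoneOn_const]
  | succ k =>
    have hP : (fun θ => binomCDFpred n θ (k + 1)) =
        fun θ => (∑ j ∈ range (k + 1), bernsteinPolynomial ℝ n j).eval θ := by
      ext θ
      simp [binomCDFpred, eval_finsetSum, binomP_eq_eval_bernsteinPolynomial]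
    rw [hP]
    refine antitoneOn_of_deriv_nonpos (convex_Icc 0 1) (Polynomial.continuousOn _)
      (Polynomial.differentiableOn _) fun θ hθ => ?_
    rw [interior_Icc] at hθ
    rw [Polynomial.deriv, bernsteinPolynomial.derivative_sum_range_succ]
    simp only [eval_mul, eval_neg, eval_natCast, neg_mul, neg_nonpos]
    exact mul_nonneg (Nat.cast_nonneg n)
      (bernsteinPolynomial.eval_nonneg _ _ hθ.1.le hθ.2.le)

noncomputable def randomizedTail (n y : ℕ) (v θ : ℝ) : ℝ :=
  (1 - v) * (1 - binomCDFpred n θ y) + v * (1 - binomCDF n θ y)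

theorem monotoneOn_randomizedTail (n y : ℕ) {v : ℝ} (hv₀ : 0 ≤ v) (hv₁ : v ≤ 1) :
    MonotoneOn (randomizedTail n y v) (Icc 0 1) := by
  intro θ hθ θ' hθ' hle
  have hpred : binomCDFpred n θ' y ≤ binomCDFpred n θ y :=
    antitoneOn_binomCDFpred n y hθ hθ' hle
  have hcdf : binomCDF n θ' y ≤ binomCDF n θ y :=
    antitoneOn_binomCDFpred n (y + 1) hθ hθ' hle
  unfold randomizedTail
  linarith [mul_le_mul_of_nonneg_left hpred (sub_nonneg.mpr hv₁),
    mul_le_mul_of_nonneg_left hcdf hv₀]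

theorem randomizedTail_eq_sub (n y : ℕ) (v w θ : ℝ) :
    randomizedTail n y w θ = randomizedTail n y v θ - (w - v) * binomP n θ y := by
  simp only [randomizedTail, binomCDF, binomCDFpred, sum_range_succ]
  ring

theorem stmt_11_general (n : ℕ) (y : ℕ) (hy : y ≤ n)
    (v₁ v₂ : ℝ) (hv₁ : 0 ≤ v₁) (hv₁₂ : v₁ < v₂) (hv₂ : v₂ ≤ 1)
    (c : ℝ)
    (θ₁ θ₂ : ℝ) (hθ₁ : θ₁ ∈ Set.Ioo (0 : ℝ) 1) (hθ₂ : θ₂ ∈ Set.Ioo (0 : ℝ) 1)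
    (h1 : (1 - v₁) * (1 - binomCDFpred n θ₁ y) + v₁ * (1 - binomCDF n θ₁ y) = c)
    (h2 : (1 - v₂) * (1 - binomCDFpred n θ₂ y) + v₂ * (1 - binomCDF n θ₂ y) = c) :
    θ₁ < θ₂ := by
  have hθ₁_lt : randomizedTail n y v₂ θ₁ < c := by
    rw [randomizedTail_eq_sub n y v₁ v₂, randomizedTail, h1]
    have := mul_pos (sub_pos.mpr hv₁₂) (binomP_pos hy hθ₁)
    linarith
  by_contra! hle
  have htail_le := monotoneOn_randomizedTail n y (hv₁.trans hv₁₂.le) hv₂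
    (Ioo_subset_Icc_self hθ₂) (Ioo_subset_Icc_self hθ₁) hle
  rw [randomizedTail, h2] at htail_le
  linarith

/-- For `0 ≤ y ≤ n`, `0 ≤ v₁ < v₂ ≤ 1`, `c ∈ (0,1)`: if `θ₁, θ₂ ∈ (0,1)` satisfy
`(1-v₁)(1 - F_{θ₁}(y-1)) + v₁(1 - F_{θ₁}(y)) = c` and
`(1-v₂)(1 - F_{θ₂}(y-1)) + v₂(1 - F_{θ₂}(y)) = c`, then `θ₁ < θ₂`
(the randomized lower endpoint `ℓ_R(y,v)` is strictly increasing in `v`). -/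
theorem stmt_11 (n : ℕ) (hn : 1 ≤ n) (y : ℕ) (hy : y ≤ n)
    (v₁ v₂ : ℝ) (hv₁ : 0 ≤ v₁) (hv₁₂ : v₁ < v₂) (hv₂ : v₂ ≤ 1)
    (c : ℝ) (hc : c ∈ Set.Ioo (0 : ℝ) 1)
    (θ₁ θ₂ : ℝ) (hθ₁ : θ₁ ∈ Set.Ioo (0 : ℝ) 1) (hθ₂ : θ₂ ∈ Set.Ioo (0 : ℝ) 1)
    (h1 : (1 - v₁) * (1 - binomCDFpred n θ₁ y) + v₁ * (1 - binomCDF n θ₁ y) = c)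
    (h2 : (1 - v₂) * (1 - binomCDFpred n θ₂ y) + v₂ * (1 - binomCDF n θ₂ y) = c) :
    θ₁ < θ₂ :=
  stmt_11_general n y hy v₁ v₂ hv₁ hv₁₂ hv₂ c θ₁ θ₂ hθ₁ hθ₂ h1 h2
end
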